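/- Let p₁, p₂ ∈ (0,1). For k ≥ 1 set a_k = (P_BKP^k)₀₂ and b_k = (P_BKP^k)₂₂. Then the normalized variance of the success count converges: lim_{N→∞} (1/N)·[ ∑_{k=1}^{N} a_k(1−a_k) + 2·∑_{1≤k<l≤N} (b_{l−k} − a_l)·a_k ] = p₁p₂[(1+p₁)² − p₁p₂(3+p₁)]/(1+p₁)³. (The bracketed quantity is N²τ²·Var[T], the exact variance of the number of successes in N steps of double-heralded entanglement generation started from the failure state; thus the leading-order throughput variance is Var[T] ≈ p₁p₂[(1+p₁)² − p₁p₂(3+p₁)]/((1+p₁)³·N·τ²).) -/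

import Mathlib

/-!
For `k ≥ 1` both `a_k = (P^k)₀₂` and `b_k = (P^k)₂₂` equal `q + c r^k` with `q = p₁p₂/(1+p₁)`,
`c = p₂/(1+p₁)`, `r = -p₁`: the eigenvalues of `P` are `1, -p₁, 0`, and the eigenvalue `0` only
affects `P⁰`. Summing the double sum by its outer index `l`, the variance becomes a sum of
increments `a_l(1 - a_l) + 2∑_{k<l}(b_{l-k} - a_l)a_k`, which are explicit in `r^l`, `l r^l` and
`∑_{k<l} r^k`. Hence they converge to `q(1 - q) + 2cq·r/(1 - r)`, and so do their Cesàro means.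
-/

open Finset Filter Topology

theorem sum_Icc_sum_Icc_add_one_comm {M : Type*} [AddCommMonoid M] (f : ℕ → ℕ → M) (N : ℕ) :
    ∑ k ∈ Icc 1 N, ∑ l ∈ Icc (k + 1) N, f k l = ∑ l ∈ Icc 1 N, ∑ k ∈ Icc 1 (l - 1), f k l :=
  sum_comm' fun k l => by simp only [mem_Icc]; omega

theorem sum_Icc_one_eq_sum_range {M : Type*} [AddCommMonoid M] (f : ℕ → M) (N : ℕ) :
    ∑ l ∈ Icc 1 N, f l = ∑ i ∈ range N, f (i + 1) := by
  rw [← Ico_add_one_right_eq_Icc, sum_Ico_eq_sum_range, add_tsub_cancel_right]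
  simp only [add_comm]

theorem sum_Icc_one_pow_reflect (r : ℝ) (m : ℕ) :
    ∑ k ∈ Icc 1 m, r ^ (m + 1 - k) = ∑ k ∈ Icc 1 m, r ^ k := by
  rw [← Ico_add_one_right_eq_Icc, sum_Ico_reflect (r ^ ·) 1 (Nat.le_succ _)]
  simp

theorem tendsto_sum_Icc_one_pow {r : ℝ} (hr : |r| < 1) :
    Tendsto (fun m : ℕ => ∑ k ∈ Icc 1 m, r ^ k) atTop (𝓝 (r / (1 - r))) := by
  have := ((hasSum_geometric_of_abs_lt_one hr).mul_left r).tendsto_sum_nat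
  simp only [← pow_succ', ← sum_Icc_one_eq_sum_range] at this
  convert this using 2
  rw [div_eq_mul_inv]

def visitVariance (a b : ℕ → ℝ) (N : ℕ) : ℝ :=
  (∑ k ∈ Icc 1 N, a k * (1 - a k)) +
    2 * ∑ k ∈ Icc 1 N, ∑ l ∈ Icc (k + 1) N, (b (l - k) - a l) * a k

def visitVarianceIncrement (a b : ℕ → ℝ) (l : ℕ) : ℝ :=
  a l * (1 - a l) + 2 * ∑ k ∈ Icc 1 (l - 1), (b (l - k) - a l) * a k

section

variable {a b : ℕ → ℝ}

theorem visitVariance_eq_sum_increment (N : ℕ) :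
    visitVariance a b N = ∑ i ∈ range N, visitVarianceIncrement a b (i + 1) := by
  rw [visitVariance, sum_Icc_sum_Icc_add_one_comm, mul_sum, ← sum_add_distrib,
    sum_Icc_one_eq_sum_range]
  rfl

theorem Filter.Tendsto.visitVariance_div {L : ℝ}
    (h : Tendsto (visitVarianceIncrement a b) atTop (𝓝 L)) :
    Tendsto (fun N : ℕ => visitVariance a b N / N) atTop (𝓝 L) := by
  simpa only [visitVariance_eq_sum_increment, div_eq_inv_mul] using
    ((tendsto_add_atTop_iff_nat 1).2 h).cesaro

variable {q c c' r : ℝ}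

theorem visitVarianceIncrement_add_one_of_geometric
    (ha : ∀ k, 0 < k → a k = q + c * r ^ k) (hb : ∀ k, 0 < k → b k = q + c' * r ^ k) (m : ℕ) :
    visitVarianceIncrement a b (m + 1) =
      (q + c * r ^ (m + 1)) * (1 - (q + c * r ^ (m + 1))) +
        2 * ((c' * q - c ^ 2 * r ^ (m + 1)) * ∑ k ∈ Icc 1 m, r ^ k +
          (c * c' - c * q) * (m * r ^ (m + 1))) := by
  have hterm : ∀ k ∈ Icc 1 m, (b (m + 1 - k) - a (m + 1)) * a k =
      c' * q * r ^ (m + 1 - k) + (c * c' - c * q) * r ^ (m + 1) - c ^ 2 * r ^ (m + 1) * r ^ k := by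
    intro k hk
    rw [mem_Icc] at hk
    rw [hb _ (by omega), ha (m + 1) (by omega), ha k hk.1,
      ← pow_sub_mul_pow r (by omega : k ≤ m + 1)]
    ring
  rw [visitVarianceIncrement, add_tsub_cancel_right, sum_congr rfl hterm, ha (m + 1) (by omega),
    sum_sub_distrib, sum_add_distrib]
  simp only [← mul_sum, sum_Icc_one_pow_reflect, sum_const, Nat.card_Icc, add_tsub_cancel_right,
    nsmul_eq_mul]
  ring

theorem tendsto_visitVarianceIncrement_of_geometric (hr : |r| < 1)
    (ha : ∀ k, 0 < k → a k = q + c * r ^ k) (hb : ∀ k, 0 < k → b k = q + c' * r ^ k) :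
    Tendsto (visitVarianceIncrement a b) atTop
      (𝓝 (q * (1 - q) + 2 * (c' * q * (r / (1 - r))))) := by
  rw [← tendsto_add_atTop_iff_nat 1]
  simp only [visitVarianceIncrement_add_one_of_geometric ha hb]
  have hpow : Tendsto (fun m : ℕ => r ^ (m + 1)) atTop (𝓝 0) :=
    (tendsto_pow_atTop_nhds_zero_of_abs_lt_one hr).comp (tendsto_add_atTop_nat 1)
  have hmul : Tendsto (fun m : ℕ => (m : ℝ) * r ^ (m + 1)) atTop (𝓝 0) := by
    simpa only [pow_succ, mul_assoc, zero_mul] using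
      (tendsto_self_mul_const_pow_of_abs_lt_one hr).mul_const r
  have ha_tendsto : Tendsto (fun m : ℕ => q + c * r ^ (m + 1)) atTop (𝓝 q) := by
    simpa using (hpow.const_mul c).const_add q
  have hcov := (((hpow.const_mul (c ^ 2)).const_sub (c' * q)).mul (tendsto_sum_Icc_one_pow hr)).add
    (hmul.const_mul (c * c' - c * q))
  convert (ha_tendsto.mul (ha_tendsto.const_sub 1)).add (hcov.const_mul 2) using 2
  simp

end

def bkpMatrix (p₁ p₂ : ℝ) : Matrix (Fin 3) (Fin 3) ℝ :=
  !![1 - p₁, p₁, 0; 1 - p₂, 0, p₂; 1 - p₁, p₁, 0]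

theorem bkpMatrix_pow_add_one_col_two (p₁ p₂ : ℝ) (hp : 1 + p₁ ≠ 0) (m : ℕ) :
    (bkpMatrix p₁ p₂ ^ (m + 1)) 0 2 = p₁ * p₂ / (1 + p₁) + p₂ / (1 + p₁) * (-p₁) ^ (m + 1) ∧
    (bkpMatrix p₁ p₂ ^ (m + 1)) 1 2 = p₁ * p₂ / (1 + p₁) + p₂ / (1 + p₁) * (-p₁) ^ m ∧
    (bkpMatrix p₁ p₂ ^ (m + 1)) 2 2 = p₁ * p₂ / (1 + p₁) + p₂ / (1 + p₁) * (-p₁) ^ (m + 1) := by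
  induction m with
  | zero =>
    simp only [zero_add, pow_one]
    refine ⟨?_, ?_, ?_⟩ <;>
    · simp only [bkpMatrix, Matrix.of_apply, Matrix.cons_val', Matrix.cons_val,
        Matrix.cons_val_fin_one, Matrix.cons_val_zero, Matrix.cons_val_one, Fin.isValue]
      field_simp
      ring
  | succ m ih =>
    obtain ⟨h0, h1, h2⟩ := ih
    rw [pow_succ']
    refine ⟨?_, ?_, ?_⟩ <;>
    · rw [Matrix.mul_apply, Fin.sum_univ_three, h0, h1, h2]
      simp only [bkpMatrix, Matrix.of_apply, Matrix.cons_val', Matrix.cons_val,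
        Matrix.cons_val_fin_one, Matrix.cons_val_zero, Matrix.cons_val_one, Fin.isValue]
      field_simp
      ring

theorem bkp_throughput_variance_limit_general (p₁ p₂ : ℝ)
    (h₁ : 0 < p₁) (h₁' : p₁ < 1) :
    let P : Matrix (Fin 3) (Fin 3) ℝ :=
      !![1 - p₁, p₁, 0; 1 - p₂, 0, p₂; 1 - p₁, p₁, 0]
    let a : ℕ → ℝ := fun k => (P ^ k) 0 2
    let b : ℕ → ℝ := fun k => (P ^ k) 2 2
    Filter.Tendsto
      (fun N : ℕ =>
        ((∑ k ∈ Finset.Icc 1 N, a k * (1 - a k)) +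
          2 * ∑ k ∈ Finset.Icc 1 N, ∑ l ∈ Finset.Icc (k + 1) N,
            (b (l - k) - a l) * a k) / N)
      Filter.atTop
      (nhds (p₁ * p₂ * ((1 + p₁) ^ 2 - p₁ * p₂ * (3 + p₁)) / (1 + p₁) ^ 3)) := by
  intro P a b
  have hp : 1 + p₁ ≠ 0 := by positivity
  have hr : |-p₁| < 1 := by rwa [abs_neg, abs_of_pos h₁]
  have ha (k : ℕ) (hk : 0 < k) : a k = p₁ * p₂ / (1 + p₁) + p₂ / (1 + p₁) * (-p₁) ^ k := by
    obtain ⟨m, rfl⟩ := Nat.exists_eq_add_one_of_ne_zero hk.ne'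
    exact (bkpMatrix_pow_add_one_col_two p₁ p₂ hp m).1
  have hb (k : ℕ) (hk : 0 < k) : b k = p₁ * p₂ / (1 + p₁) + p₂ / (1 + p₁) * (-p₁) ^ k := by
    obtain ⟨m, rfl⟩ := Nat.exists_eq_add_one_of_ne_zero hk.ne'
    exact (bkpMatrix_pow_add_one_col_two p₁ p₂ hp m).2.2
  have hlim := (tendsto_visitVarianceIncrement_of_geometric hr ha hb).visitVariance_div
  have hval : p₁ * p₂ / (1 + p₁) * (1 - p₁ * p₂ / (1 + p₁)) +
      2 * (p₂ / (1 + p₁) * (p₁ * p₂ / (1 + p₁)) * (-p₁ / (1 - -p₁))) =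
      p₁ * p₂ * ((1 + p₁) ^ 2 - p₁ * p₂ * (3 + p₁)) / (1 + p₁) ^ 3 := by
    rw [sub_neg_eq_add]
    field_simp
    ring
  rwa [hval] at hlim

/-- Leading-order throughput variance of double-heralded entanglement generation:
for `p₁, p₂ ∈ (0,1)`, with `a_k = (P_BKP^k)₀₂` and `b_k = (P_BKP^k)₂₂`, the
normalized variance of the success count over `N` steps converges as `N → ∞` to
`p₁p₂[(1+p₁)² − p₁p₂(3+p₁)]/(1+p₁)³`. -/
theorem bkp_throughput_variance_limit (p₁ p₂ : ℝ)
    (h₁ : 0 < p₁) (h₁' : p₁ < 1) (h₂ : 0 < p₂) (h₂' : p₂ < 1) :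
    let P : Matrix (Fin 3) (Fin 3) ℝ :=
      !![1 - p₁, p₁, 0; 1 - p₂, 0, p₂; 1 - p₁, p₁, 0]
    let a : ℕ → ℝ := fun k => (P ^ k) 0 2
    let b : ℕ → ℝ := fun k => (P ^ k) 2 2
    Filter.Tendsto
      (fun N : ℕ =>
        ((∑ k ∈ Finset.Icc 1 N, a k * (1 - a k)) +
          2 * ∑ k ∈ Finset.Icc 1 N, ∑ l ∈ Finset.Icc (k + 1) N,
            (b (l - k) - a l) * a k) / N)
      Filter.atTop
      (nhds (p₁ * p₂ * ((1 + p₁) ^ 2 - p₁ * p₂ * (3 + p₁)) / (1 + p₁) ^ 3)) :=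
  bkp_throughput_variance_limit_general p₁ p₂ h₁ h₁'
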